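/- Prove that if W and Z are rows with W dominating Z (so W·Z is already a two-row Young tableau), then the vector insertion algorithm applied to (W, Z) returns (W, Z) itself, i.e., x_p = w_p for all p; consequently Young tableau words are irreducible under the rewriting system Λ. -/

import Mathlib

open Finset

/-- Partial sum `Φ_p = φ_1 + ⋯ + φ_p` of a multiplicity vector. -/
def PS (f : ℕ → ℕ) (p : ℕ) : ℕ := ∑ i ∈ Finset.Icc 1 p, f i

/-- Partial sums `X_p` of the bumped row in the vector insertion `W·Z = X·Y`:
`X_0 = X_1 = 0`, `X_{p+1} = min(Z_p, X_p + w_{p+1})`. -/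
def capX (W Z : ℕ → ℕ) : ℕ → ℕ
  | 0 => 0
  | p + 1 => if p = 0 then 0 else min (PS Z p) (capX W Z p + W (p + 1))

/-- Component `x_p = X_p - X_{p-1} = min(Z_{p-1} - X_{p-1}, w_p)` (with `x_1 = 0`). -/
def xcomp (W Z : ℕ → ℕ) (p : ℕ) : ℕ := capX W Z p - capX W Z (p - 1)

/-- Component `y_q = w_q + z_q - x_q`. -/
def ycomp (W Z : ℕ → ℕ) (q : ℕ) : ℕ := W q + Z q - xcomp W Z q

lemma PS_succ (f : ℕ → ℕ) (p : ℕ) : PS f (p + 1) = PS f p + f (p + 1) :=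
  Finset.sum_Icc_succ_top (by omega) f

lemma capX_succ_of_ne_zero (W Z : ℕ → ℕ) {p : ℕ} (hp : p ≠ 0) :
    capX W Z (p + 1) = min (PS Z p) (capX W Z p + W (p + 1)) :=
  if_neg hp

-- Domination says exactly that the cap `Z_p` in the recursion for `X_{p+1}` is never active.
lemma capX_eq_PS_of_dominates (n : ℕ) (W Z : ℕ → ℕ) (h1 : W 1 = 0)
    (hdom : ∀ p, 2 ≤ p → p ≤ n → PS W p ≤ PS Z (p - 1)) :
    ∀ p, p ≤ n → capX W Z p = PS W p := by
  intro p
  induction p with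
  | zero => intro; rfl
  | succ p ih =>
    intro hpn
    rcases Nat.eq_zero_or_pos p with rfl | hp
    · simp [capX, PS, h1]
    · have hcap : PS W (p + 1) ≤ PS Z p := hdom (p + 1) (by omega) hpn
      rw [capX_succ_of_ne_zero W Z hp.ne', ih (by omega), ← PS_succ]
      exact min_eq_right hcap

lemma xcomp_succ_eq_of_capX_eq_PS (W Z : ℕ → ℕ) {p : ℕ} (hp : capX W Z p = PS W p)
    (hsucc : capX W Z (p + 1) = PS W (p + 1)) : xcomp W Z (p + 1) = W (p + 1) := by
  rw [xcomp, Nat.add_sub_cancel, hp, hsucc, PS_succ, Nat.add_sub_cancel_left]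

lemma ycomp_eq_of_xcomp_eq (W Z : ℕ → ℕ) {q : ℕ} (hx : xcomp W Z q = W q) :
    ycomp W Z q = Z q := by
  rw [ycomp, hx, Nat.add_sub_cancel_left]

/-- If `W` dominates `Z` (i.e. `w_1 = 0` and `W_p ≤ Z_{p-1}` for `2 ≤ p ≤ n`),
then the insertion algorithm returns `(W, Z)` itself (`x_p = w_p`, `y_p = z_p`):
Young tableau words are irreducible under the rewriting system `Λ`. -/
theorem insertion_fixes_tableau (n : ℕ) (W Z : ℕ → ℕ)
    (h1 : W 1 = 0)
    (hdom : ∀ p, 2 ≤ p → p ≤ n → PS W p ≤ PS Z (p - 1)) :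
    ∀ p, 1 ≤ p → p ≤ n → xcomp W Z p = W p ∧ ycomp W Z p = Z p := by
  intro p hp hpn
  obtain ⟨q, rfl⟩ : ∃ q, p = q + 1 := ⟨p - 1, by omega⟩
  have hX := capX_eq_PS_of_dominates n W Z h1 hdom
  have hx : xcomp W Z (q + 1) = W (q + 1) :=
    xcomp_succ_eq_of_capX_eq_PS W Z (hX q (by omega)) (hX (q + 1) hpn)
  exact ⟨hx, ycomp_eq_of_xcomp_eq W Z hx⟩
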